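/- Let q be an odd prime power. Define N_α = I_{q+1} ⊗ (J_{q²} − I_q ⊗ J_q) + Σ_{a∈F_q} P_a ⊗ (C_{a,α} R) for α ∈ F_q, where P_a are the symmetric permutation matrices of a symmetric Latin square of order q+1 with constant diagonal on F_q ∪ {x}, C_{a,α} the auxiliary matrices from the multiplication table of F_q, and R the q²×q² exchange matrix. Then for all α, β ∈ F_q: N_α N_β = q² (I_{q+1} ⊗ I_q ⊗ φ(α−β)) + (q² − 4q + 3)(I_{q+1} ⊗ J_{q²}) + 3(q−1) J_{(q+1)q²}. -/

import Mathlib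

open Matrix Kronecker BigOperators
open scoped Classical

noncomputable section

variable (F : Type*) [Field F] [Fintype F]

/-- The regular permutation representation of the additive group of `F`:
`φ(α)` is the permutation matrix of translation by `α`. -/
def phi (α : F) : Matrix F F ℝ :=
  Matrix.of fun x y => if x + α = y then 1 else 0

/-- The auxiliary `q² × q²` matrix `C_{a,α}` whose `(β,β')`-block is `φ(a(β'-β)+α)`. -/
def Cmat (a α : F) : Matrix (F × F) (F × F) ℝ :=
  Matrix.of fun p q => if p.2 + (a * (q.1 - p.1) + α) = q.2 then 1 else 0

/-- All-ones matrix. -/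
def Jmat (ι : Type*) : Matrix ι ι ℝ := Matrix.of fun _ _ => 1

/-- The `q² × q²` back identity (exchange) matrix indexed by `F × F`,
corresponding to negation of indices. -/
def Rmat : Matrix (F × F) (F × F) ℝ :=
  Matrix.of fun p q => if q = (-p.1, -p.2) then 1 else 0

/-- The hypotheses that `P` is the family of symmetric permutation matrices of a
symmetric Latin square of order `q+1` on the symbol set `F ∪ {x}` (encoded as `Option F`,
`x = none`) with constant diagonal `x`. -/
def IsLatinFamily (P : Option F → Matrix (Option F) (Option F) ℝ) : Prop :=
  P none = 1 ∧
  (∀ a, (P a)ᵀ = P a) ∧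
  (∀ a, P a * P a = 1) ∧
  (∀ a, P a * Jmat (Option F) = Jmat (Option F)) ∧
  (∑ a : Option F, P a = Jmat (Option F)) ∧
  (∀ a : F, ∀ i, P (some a) i i = 0)

/-- `N_α = I_{q+1} ⊗ (J_{q²} - I_q ⊗ J_q) + ∑_{a ∈ F_q} P_a ⊗ (C_{a,α} R)`. -/
def Nmat (P : Option F → Matrix (Option F) (Option F) ℝ) (α : F) :
    Matrix (Option F × (F × F)) (Option F × (F × F)) ℝ :=
  (1 : Matrix (Option F) (Option F) ℝ) ⊗ₖ (Jmat (F × F) - (1 : Matrix F F ℝ) ⊗ₖ Jmat F)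
    + ∑ a : F, P (some a) ⊗ₖ (Cmat F a α * Rmat F)

end

/-! Write `N_α = I ⊗ B + ∑ₐ Pₐ ⊗ C_{a,α} R` with `B = J − I ⊗ J`. Since `R² = I` and
`C_{a,α} R = R C_{a,−α}`, the products `(C_{a,α} R)(C_{b,β} R) = C_{a,α} C_{b,−β}` equal `J` for
`a ≠ b` and `q C_{a,α−β}` for `a = b`, while `B` turns every `C_{a,α} R`, on either side, into
`(q − 1) J`. In the expansion of `N_α N_β` the off-diagonal terms therefore collect into
`(∑ₐ Pₐ)² ⊗ J = ((q − 1) J + I) ⊗ J`, the diagonal ones (where `Pₐ² = I`) into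
`I ⊗ (q ∑ₐ C_{a,α−β} − q J)`, and `∑ₐ C_{a,γ} = q I ⊗ φ(γ) + J − I ⊗ J` supplies the
`φ(α − β)` term. -/

section Kronecker

variable {ι l m n : Type*} {R : Type*}

theorem sum_kronecker [NonUnitalNonAssocSemiring R] (s : Finset ι) (A : ι → Matrix l m R)
    (B : Matrix n n R) : (∑ i ∈ s, A i) ⊗ₖ B = ∑ i ∈ s, A i ⊗ₖ B := by
  ext ⟨_, _⟩ ⟨_, _⟩
  simp [Matrix.sum_apply, Finset.sum_mul]

theorem kronecker_sum [NonUnitalNonAssocSemiring R] (s : Finset ι) (A : Matrix l m R)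
    (B : ι → Matrix n n R) : A ⊗ₖ (∑ i ∈ s, B i) = ∑ i ∈ s, A ⊗ₖ B i := by
  ext ⟨_, _⟩ ⟨_, _⟩
  simp [Matrix.sum_apply, Finset.mul_sum]

theorem kronecker_sub [NonUnitalNonAssocRing R] (A : Matrix l m R) (B C : Matrix n n R) :
    A ⊗ₖ (B - C) = A ⊗ₖ B - A ⊗ₖ C := by
  ext ⟨_, _⟩ ⟨_, _⟩
  simp [mul_sub]

theorem sub_kronecker [NonUnitalNonAssocRing R] (A B : Matrix l m R) (C : Matrix n n R) :
    (A - B) ⊗ₖ C = A ⊗ₖ C - B ⊗ₖ C := by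
  ext ⟨_, _⟩ ⟨_, _⟩
  simp [sub_mul]

theorem sum_kronecker_mul_sum_kronecker_of_ne [Fintype ι] [DecidableEq ι] [Fintype m]
    [Fintype n] [CommRing R] (A : ι → Matrix m m R) (X Y : ι → Matrix n n R)
    (K : Matrix n n R) (hK : ∀ a b, a ≠ b → X a * Y b = K) :
    (∑ a, A a ⊗ₖ X a) * (∑ b, A b ⊗ₖ Y b)
      = ((∑ a, A a) * ∑ b, A b) ⊗ₖ K + ∑ a, (A a * A a) ⊗ₖ (X a * Y a - K) := by
  have hrow : ∀ a, ∑ b, (A a * A b) ⊗ₖ (X a * Y b)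
      = ∑ b, (A a * A b) ⊗ₖ K + (A a * A a) ⊗ₖ (X a * Y a - K) := by
    intro a
    rw [← Finset.add_sum_erase _ _ (Finset.mem_univ a),
      ← Finset.add_sum_erase _ _ (Finset.mem_univ a), kronecker_sub,
      Finset.sum_congr rfl fun b hb => by rw [hK a b (Finset.ne_of_mem_erase hb).symm]]
    abel
  simp only [Finset.sum_mul_sum, ← mul_kronecker_mul, hrow, Finset.sum_add_distrib,
    sum_kronecker]

end Kronecker

theorem Jmat_kronecker_Jmat (ι κ : Type*) : Jmat ι ⊗ₖ Jmat κ = Jmat (ι × κ) := by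
  ext ⟨_, _⟩ ⟨_, _⟩
  simp [Jmat]

section Jmat

variable {ι : Type*} [Fintype ι]

theorem Jmat_mul_Jmat : Jmat ι * Jmat ι = (Fintype.card ι : ℝ) • Jmat ι := by
  ext
  simp [Jmat, mul_apply]

theorem Jmat_sub_one_mul_self [DecidableEq ι] :
    (Jmat ι - 1) * (Jmat ι - 1) = ((Fintype.card ι : ℝ) - 2) • Jmat ι + 1 := by
  rw [sub_mul, mul_sub, mul_sub, Jmat_mul_Jmat, one_mul, mul_one, mul_one]
  module

end Jmat

section Translation

variable {F : Type*} [Field F] [Fintype F]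

omit [Fintype F] in
theorem phi_apply (α x y : F) : phi F α x y = if x + α = y then 1 else 0 := rfl

theorem phi_mul_phi (α β : F) : phi F α * phi F β = phi F (α + β) := by
  ext x y
  simp only [mul_apply, phi_apply, boole_mul, Finset.sum_ite_eq, Finset.mem_univ, if_true,
    add_assoc]

theorem sum_phi_apply_left (α y : F) : ∑ x, phi F α x y = 1 := by
  simp_rw [phi_apply, ← eq_sub_iff_add_eq]
  simp

theorem sum_phi_apply_right (α x : F) : ∑ y, phi F α x y = 1 := by
  simp [phi_apply]

theorem sum_phi_apply (x y : F) : ∑ α, phi F α x y = 1 := by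
  simp_rw [phi_apply, add_comm x, ← eq_sub_iff_add_eq]
  simp

theorem sum_phi_affine_apply {c : F} (hc : c ≠ 0) (d x y : F) :
    ∑ k, phi F (c * k + d) x y = 1 := by
  rw [← sum_phi_apply x y]
  exact Fintype.sum_bijective _
    ((AddGroup.addRight_bijective d).comp (mulLeft_bijective₀ c hc)) _ _ fun _ => rfl

end Translation

section Exchange

variable {F : Type*} [Field F] [Fintype F]

omit [Fintype F] in
theorem Rmat_apply (p r : F × F) : Rmat F p r = if r = -p then 1 else 0 := rfl

theorem mul_Rmat_apply (M : Matrix (F × F) (F × F) ℝ) (p r : F × F) :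
    (M * Rmat F) p r = M p (-r) := by
  simp_rw [mul_apply, Rmat_apply, ← neg_eq_iff_eq_neg]
  simp

theorem Rmat_mul_apply (M : Matrix (F × F) (F × F) ℝ) (p r : F × F) :
    (Rmat F * M) p r = M (-p) r := by
  simp [mul_apply, Rmat_apply]

theorem Rmat_mul_Rmat : Rmat F * Rmat F = 1 := by
  ext p r
  simp [mul_Rmat_apply, Rmat_apply, one_apply, eq_comm]

theorem Jmat_mul_Rmat : Jmat (F × F) * Rmat F = Jmat (F × F) := by
  ext p r
  simp [mul_Rmat_apply, Jmat]

theorem Rmat_mul_Jmat : Rmat F * Jmat (F × F) = Jmat (F × F) := by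
  ext p r
  simp [Rmat_mul_apply, Jmat]

end Exchange

section Cmat

variable {F : Type*} [Field F] [Fintype F]

omit [Fintype F] in
theorem Cmat_apply (a α : F) (p r : F × F) :
    Cmat F a α p r = phi F (a * (r.1 - p.1) + α) p.2 r.2 := rfl

theorem Cmat_mul_Cmat_apply (a b α β : F) (p r : F × F) :
    (Cmat F a α * Cmat F b β) p r
      = ∑ k, phi F (a * (k - p.1) + α + (b * (r.1 - k) + β)) p.2 r.2 := by
  simp only [mul_apply, Fintype.sum_prod_type, Cmat_apply, ← phi_mul_phi]

theorem Cmat_mul_Cmat_self (a α β : F) :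
    Cmat F a α * Cmat F a β = (Fintype.card F : ℝ) • Cmat F a (α + β) := by
  ext p r
  have hk : ∀ k, a * (k - p.1) + α + (a * (r.1 - k) + β) = a * (r.1 - p.1) + (α + β) :=
    fun k => by ring
  simp [Cmat_mul_Cmat_apply, hk, Cmat_apply]

theorem Cmat_mul_Cmat_of_ne {a b : F} (hab : a ≠ b) (α β : F) :
    Cmat F a α * Cmat F b β = Jmat (F × F) := by
  ext p r
  have hk : ∀ k, a * (k - p.1) + α + (b * (r.1 - k) + β)
      = (a - b) * k + (b * r.1 - a * p.1 + α + β) := fun k => by ring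
  simp only [Cmat_mul_Cmat_apply, hk, sum_phi_affine_apply (sub_ne_zero.mpr hab), Jmat, of_apply]

theorem Jmat_mul_Cmat (a α : F) :
    Jmat (F × F) * Cmat F a α = (Fintype.card F : ℝ) • Jmat (F × F) := by
  ext p r
  simp [mul_apply, Fintype.sum_prod_type, Jmat, Cmat_apply, sum_phi_apply_left]

theorem Cmat_mul_Jmat (a α : F) :
    Cmat F a α * Jmat (F × F) = (Fintype.card F : ℝ) • Jmat (F × F) := by
  ext p r
  simp [mul_apply, Fintype.sum_prod_type, Jmat, Cmat_apply, sum_phi_apply_right]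

theorem one_kronecker_Jmat_mul_Cmat (a α : F) :
    ((1 : Matrix F F ℝ) ⊗ₖ Jmat F) * Cmat F a α = Jmat (F × F) := by
  ext p r
  simp [mul_apply, Fintype.sum_prod_type, Jmat, Cmat_apply, one_apply, sum_phi_apply_left]

theorem Cmat_mul_one_kronecker_Jmat (a α : F) :
    Cmat F a α * ((1 : Matrix F F ℝ) ⊗ₖ Jmat F) = Jmat (F × F) := by
  ext p r
  simp [mul_apply, Fintype.sum_prod_type, Jmat, Cmat_apply, one_apply, sum_phi_apply_right]

theorem sum_Cmat (γ : F) :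
    ∑ a, Cmat F a γ = (Fintype.card F : ℝ) • ((1 : Matrix F F ℝ) ⊗ₖ phi F γ)
      + Jmat (F × F) - (1 : Matrix F F ℝ) ⊗ₖ Jmat F := by
  ext p r
  by_cases h : p.1 = r.1
  · simp [Matrix.sum_apply, Cmat_apply, Jmat, one_apply, h]
  · have hsum := sum_phi_affine_apply (sub_ne_zero.mpr (Ne.symm h)) γ p.2 r.2
    simp only [mul_comm (r.1 - p.1)] at hsum
    simp [Matrix.sum_apply, Cmat_apply, Jmat, one_apply, h, hsum]

theorem Cmat_mul_Rmat (a α : F) : Cmat F a α * Rmat F = Rmat F * Cmat F a (-α) := by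
  ext p r
  simp only [mul_Rmat_apply, Rmat_mul_apply, Cmat_apply, phi_apply, Prod.fst_neg, Prod.snd_neg]
  congr 1
  apply propext
  constructor <;> intro h <;> linear_combination -h

end Cmat

noncomputable def offDiagBlocks (F : Type*) [Fintype F] : Matrix (F × F) (F × F) ℝ :=
  Jmat (F × F) - (1 : Matrix F F ℝ) ⊗ₖ Jmat F

section OffDiagBlocks

variable {F : Type*} [Field F] [Fintype F]

omit [Field F] in
theorem offDiagBlocks_mul_self :
    offDiagBlocks F * offDiagBlocks F
      = ((Fintype.card F : ℝ) ^ 2 - 2 * Fintype.card F) • Jmat (F × F)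
        + (Fintype.card F : ℝ) • ((1 : Matrix F F ℝ) ⊗ₖ Jmat F) := by
  simp only [offDiagBlocks, ← Jmat_kronecker_Jmat F F, sub_mul, mul_sub, ← mul_kronecker_mul,
    Jmat_mul_Jmat, one_mul, mul_one, smul_kronecker, kronecker_smul, smul_smul]
  module

theorem offDiagBlocks_mul_Cmat_mul_Rmat (a α : F) :
    offDiagBlocks F * (Cmat F a α * Rmat F) = ((Fintype.card F : ℝ) - 1) • Jmat (F × F) := by
  rw [offDiagBlocks, ← mul_assoc, sub_mul, Jmat_mul_Cmat, one_kronecker_Jmat_mul_Cmat, sub_mul,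
    smul_mul_assoc, Jmat_mul_Rmat, sub_smul, one_smul]

theorem Cmat_mul_Rmat_mul_offDiagBlocks (a α : F) :
    Cmat F a α * Rmat F * offDiagBlocks F = ((Fintype.card F : ℝ) - 1) • Jmat (F × F) := by
  rw [offDiagBlocks, Cmat_mul_Rmat, mul_assoc, mul_sub, Cmat_mul_Jmat, Cmat_mul_one_kronecker_Jmat,
    mul_sub, mul_smul_comm, Rmat_mul_Jmat, sub_smul, one_smul]

theorem Cmat_mul_Rmat_mul_Cmat_mul_Rmat (a b α β : F) :
    Cmat F a α * Rmat F * (Cmat F b β * Rmat F) = Cmat F a α * Cmat F b (-β) := by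
  rw [Cmat_mul_Rmat b, mul_assoc, ← mul_assoc (Rmat F), Rmat_mul_Rmat, one_mul]

end OffDiagBlocks

theorem Nmat_eq {F : Type*} [Field F] [Fintype F] (P : Option F → Matrix (Option F) (Option F) ℝ)
    (α : F) : Nmat F P α
      = (1 : Matrix (Option F) (Option F) ℝ) ⊗ₖ offDiagBlocks F
        + ∑ a : F, P (some a) ⊗ₖ (Cmat F a α * Rmat F) := rfl

theorem IsLatinFamily.sum_some {F : Type*} [Field F] [Fintype F]
    {P : Option F → Matrix (Option F) (Option F) ℝ} (hP : IsLatinFamily F P) :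
    ∑ a : F, P (some a) = Jmat (Option F) - 1 := by
  rw [eq_sub_iff_add_eq', ← hP.1, ← Fintype.sum_option]
  exact hP.2.2.2.2.1

theorem Nmat_mul_general (F : Type*) [Field F] [Fintype F]
    (P : Option F → Matrix (Option F) (Option F) ℝ) (hP : IsLatinFamily F P)
    (α β : F) :
    Nmat F P α * Nmat F P β
      = ((Fintype.card F : ℝ) ^ 2) •
          ((1 : Matrix (Option F) (Option F) ℝ) ⊗ₖ ((1 : Matrix F F ℝ) ⊗ₖ phi F (α - β)))
        + ((Fintype.card F : ℝ) ^ 2 - 4 * (Fintype.card F : ℝ) + 3) •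
            ((1 : Matrix (Option F) (Option F) ℝ) ⊗ₖ Jmat (F × F))
        + (3 * ((Fintype.card F : ℝ) - 1)) • Jmat (Option F × (F × F)) := by
  have hPP : (∑ a, P (some a)) * ∑ b, P (some b)
      = ((Fintype.card F : ℝ) - 1) • Jmat (Option F) + 1 := by
    rw [hP.sum_some, Jmat_sub_one_mul_self, Fintype.card_option, Nat.cast_succ]
    ring_nf
  have hdiag : ∀ a, (P (some a) * P (some a)) ⊗ₖ
      (Cmat F a α * Rmat F * (Cmat F a β * Rmat F) - Jmat (F × F))
      = (1 : Matrix (Option F) (Option F) ℝ) ⊗ₖ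
          ((Fintype.card F : ℝ) • Cmat F a (α - β) - Jmat (F × F)) := fun a => by
    rw [hP.2.2.1, Cmat_mul_Rmat_mul_Cmat_mul_Rmat, Cmat_mul_Cmat_self, ← sub_eq_add_neg]
  rw [Nmat_eq, Nmat_eq, add_mul, mul_add, mul_add, Matrix.mul_sum, Matrix.sum_mul,
    sum_kronecker_mul_sum_kronecker_of_ne _ _ _ (Jmat (F × F)) fun a b hab => by
      rw [Cmat_mul_Rmat_mul_Cmat_mul_Rmat, Cmat_mul_Cmat_of_ne hab], hPP]
  simp_rw [← mul_kronecker_mul, one_mul, mul_one, offDiagBlocks_mul_self,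
    offDiagBlocks_mul_Cmat_mul_Rmat, Cmat_mul_Rmat_mul_offDiagBlocks, hdiag, kronecker_smul,
    ← Finset.smul_sum, ← sum_kronecker, ← kronecker_sum, Finset.sum_sub_distrib,
    ← Finset.smul_sum, sum_Cmat, hP.sum_some]
  simp only [add_kronecker, sub_kronecker, kronecker_add, kronecker_sub, smul_kronecker,
    kronecker_smul, Jmat_kronecker_Jmat, Finset.sum_const, Finset.card_univ]
  module

/-- `N_α N_β = q² (I_{q+1} ⊗ I_q ⊗ φ(α-β)) + (q² - 4q + 3)(I_{q+1} ⊗ J_{q²})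
+ 3(q-1) J_{(q+1)q²}`. -/
theorem Nmat_mul (F : Type*) [Field F] [Fintype F] (hodd : Odd (Fintype.card F))
    (P : Option F → Matrix (Option F) (Option F) ℝ) (hP : IsLatinFamily F P)
    (α β : F) :
    Nmat F P α * Nmat F P β
      = ((Fintype.card F : ℝ) ^ 2) •
          ((1 : Matrix (Option F) (Option F) ℝ) ⊗ₖ ((1 : Matrix F F ℝ) ⊗ₖ phi F (α - β)))
        + ((Fintype.card F : ℝ) ^ 2 - 4 * (Fintype.card F : ℝ) + 3) •
            ((1 : Matrix (Option F) (Option F) ℝ) ⊗ₖ Jmat (F × F))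
        + (3 * ((Fintype.card F : ℝ) - 1)) • Jmat (Option F × (F × F)) :=
  Nmat_mul_general F P hP α β
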